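/- arXiv:2107.08550 — 6 statements merged into one kernel-verified Lean document; each statement's English description precedes it below -/
import Mathlib

section
/- Suboptimality of general assignments (Lemma 1): Let g be a normalized, monotone, submodular set function on a finite ground set Ω partitioned into nonempty pairwise-disjoint blocks U_1, …, U_n. Let X^d = {x^d_1, …, x^d_n} be any assignment with x^d_i ∈ U_i, and let X* be any set containing at most one element of each block (in particular a maximizer of g over such sets). Then g(X*) ≤ 2·g(X^d) + Σ_{i=1}^{n} γ^gen_i(g, x^d_i, X^d_{1:i−1}), where γ^gen_i(g, x, A) := max_{x'∈U_i} g(x'|A) − g(x|A) and X^d_{1:i−1} := {x^d_1, …, x^d_{i−1}}. -/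
/-!
Extend the assignment `X^d` by the elements of `X*` one block at a time, in the order of the
blocks. Each step adds at most one element `s ∈ U_i` to a set containing `X^d ⊇ X^d_{1:i-1}`, so by
submodularity its gain is at most `g(s | X^d_{1:i-1}) ≤ max_{x ∈ U_i} g(x | X^d_{1:i-1})`. Hence
`g(X*) ≤ g(X^d ∪ X*) ≤ g(X^d) + Σ_i max_{x ∈ U_i} g(x | X^d_{1:i-1})`, and the marginal gains
`g(x^d_i | X^d_{1:i-1})` telescope to `g(X^d)`.
-/

open Finset

/-- Marginal gain `g(C|A) = g(A ∪ C) − g(A)`. -/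
def marg {Ω : Type*} [DecidableEq Ω] (g : Finset Ω → ℝ) (C A : Finset Ω) : ℝ :=
  g (A ∪ C) - g A

section

variable {Ω ι : Type*} [DecidableEq Ω] {g : Finset Ω → ℝ}

def IsSubmodular (g : Finset Ω → ℝ) : Prop :=
  ∀ ⦃A B C : Finset Ω⦄, B ⊆ A → Disjoint A C → g (A ∪ C) - g A ≤ g (B ∪ C) - g B

theorem marg_nonneg (hg : Monotone g) (C A : Finset Ω) : 0 ≤ marg g C A :=
  sub_nonneg.2 (hg subset_union_left)

theorem marg_singleton_anti (hg : Monotone g) (hsub : IsSubmodular g) {A B : Finset Ω}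
    (hBA : B ⊆ A) (x : Ω) : marg g {x} A ≤ marg g {x} B := by
  by_cases hx : x ∈ A
  · calc marg g {x} A = 0 := by simp [marg, insert_eq_of_mem hx]
      _ ≤ marg g {x} B := marg_nonneg hg _ _
  · exact hsub hBA (disjoint_singleton_right.2 hx)

theorem marg_le_sup'_of_card_le_one (hg : Monotone g) (hsub : IsSubmodular g)
    {D U B C : Finset Ω} (hU : U.Nonempty) (hDU : D ⊆ U) (hD : D.card ≤ 1) (hBC : B ⊆ C) :
    marg g D C ≤ U.sup' hU (fun x => marg g {x} B) := by
  have hsup_nonneg : 0 ≤ U.sup' hU (fun x => marg g {x} B) :=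
    (marg_nonneg hg {hU.choose} B).trans (le_sup' (fun x => marg g {x} B) hU.choose_spec)
  rcases D.eq_empty_or_nonempty with rfl | hne
  · simpa [marg] using hsup_nonneg
  · obtain ⟨y, rfl⟩ := card_eq_one.1 (le_antisymm hD (card_pos.2 hne))
    exact (marg_singleton_anti hg hsub hBC y).trans
      (le_sup' (fun x => marg g {x} B) (singleton_subset_iff.1 hDU))

theorem sub_eq_sum_marg_biUnion [LinearOrder ι] (g : Finset Ω → ℝ) (B : Finset Ω)
    (D : ι → Finset Ω) (s : Finset ι) :
    g (B ∪ s.biUnion D) - g B = ∑ i ∈ s, marg g (D i) (B ∪ (s.filter (· < i)).biUnion D) := by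
  induction s using Finset.induction_on_max with
  | empty => simp
  | insert a s ha ih =>
    have hlt : (insert a s).filter (· < a) = s := by
      rw [filter_insert, if_neg (lt_irrefl a), filter_true_of_mem ha]
    have hs : ∀ i ∈ s, (insert a s).filter (· < i) = s.filter (· < i) := fun i hi => by
      rw [filter_insert, if_neg (not_lt.2 (ha i hi).le)]
    rw [sum_insert fun h => lt_irrefl a (ha a h), hlt, sum_congr rfl fun i hi => by rw [hs i hi],
      ← ih, marg, biUnion_insert, union_comm (D a), ← union_assoc, sub_add_sub_cancel]

theorem sum_marg_singleton_image_filter_lt [LinearOrder ι] (g : Finset Ω → ℝ) (f : ι → Ω)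
    (s : Finset ι) :
    ∑ i ∈ s, marg g {f i} ((s.filter (· < i)).image f) = g (s.image f) - g ∅ := by
  simpa only [empty_union, biUnion_singleton] using
    (sub_eq_sum_marg_biUnion g ∅ (fun i => {f i}) s).symm

theorem sub_le_sum_sup'_marg [LinearOrder ι] (hg : Monotone g) (hsub : IsSubmodular g)
    (s : Finset ι) (U : ι → Finset Ω) (hU : ∀ i, (U i).Nonempty) {A : ι → Finset Ω}
    {B X : Finset Ω} (hAB : ∀ i, A i ⊆ B) (hX : ∀ i, (X ∩ U i).card ≤ 1) :
    g (B ∪ s.biUnion (fun i => X ∩ U i)) - g B ≤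
      ∑ i ∈ s, (U i).sup' (hU i) (fun x => marg g {x} (A i)) := by
  rw [sub_eq_sum_marg_biUnion]
  exact sum_le_sum fun i _ => marg_le_sup'_of_card_le_one hg hsub (hU i) inter_subset_right
    (hX i) ((hAB i).trans subset_union_left)

end

theorem suboptimality_of_general_assignments_general
    {Ω : Type*} [DecidableEq Ω]
    (g : Finset Ω → ℝ)
    (hnorm : g ∅ = 0)
    (hmono : ∀ ⦃A B : Finset Ω⦄, B ⊆ A → g B ≤ g A)
    (hsub : ∀ ⦃A B C : Finset Ω⦄, B ⊆ A → Disjoint A C →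
      g (A ∪ C) - g A ≤ g (B ∪ C) - g B)
    (n : ℕ) (U : Fin n → Finset Ω)
    (hUne : ∀ i, (U i).Nonempty)
    (hUcover : ∀ x : Ω, ∃ i, x ∈ U i)
    (xd : Fin n → Ω)
    (Xstar : Finset Ω) (hXstar : ∀ i, (Xstar ∩ U i).card ≤ 1) :
    g Xstar ≤ 2 * g (Finset.image xd Finset.univ)
      + ∑ i : Fin n,
          ((U i).sup' (hUne i)
              (fun x => marg g {x} (Finset.image xd (Finset.univ.filter (· < i))))
            - marg g {xd i} (Finset.image xd (Finset.univ.filter (· < i)))) := by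
  have hg : Monotone g := fun _ _ h => hmono h
  set Xd := univ.image xd
  have hXstar_le : g Xstar ≤ g (Xd ∪ univ.biUnion fun i => Xstar ∩ U i) := hg fun x hx => by
    obtain ⟨i, hi⟩ := hUcover x
    exact mem_union_right _ (mem_biUnion.2 ⟨i, mem_univ i, mem_inter.2 ⟨hx, hi⟩⟩)
  have hgain := sub_le_sum_sup'_marg hg hsub univ U hUne
    (fun i => image_subset_image (f := xd) (filter_subset (· < i) univ)) hXstar
  have hXd := sum_marg_singleton_image_filter_lt g xd univ
  rw [sum_sub_distrib, hXd, hnorm]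
  linarith

/-- suboptimality of general assignments (Lemma 1). -/
theorem suboptimality_of_general_assignments
    {Ω : Type*} [Fintype Ω] [DecidableEq Ω]
    (g : Finset Ω → ℝ)
    (hnorm : g ∅ = 0)
    (hmono : ∀ ⦃A B : Finset Ω⦄, B ⊆ A → g B ≤ g A)
    (hsub : ∀ ⦃A B C : Finset Ω⦄, B ⊆ A → Disjoint A C →
      g (A ∪ C) - g A ≤ g (B ∪ C) - g B)
    (n : ℕ) (U : Fin n → Finset Ω)
    (hUne : ∀ i, (U i).Nonempty)
    (hUdisj : ∀ i j, i ≠ j → Disjoint (U i) (U j))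
    (hUcover : ∀ x : Ω, ∃ i, x ∈ U i)
    (xd : Fin n → Ω) (hxd : ∀ i, xd i ∈ U i)
    (Xstar : Finset Ω) (hXstar : ∀ i, (Xstar ∩ U i).card ≤ 1) :
    g Xstar ≤ 2 * g (Finset.image xd Finset.univ)
      + ∑ i : Fin n,
          ((U i).sup' (hUne i)
              (fun x => marg g {x} (Finset.image xd (Finset.univ.filter (· < i))))
            - marg g {xd i} (Finset.image xd (Finset.univ.filter (· < i)))) :=
  suboptimality_of_general_assignments_general g hnorm hmono hsub n U hUne hUcover xd Xstar hXstar
end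

section
/- Second-derivative bound via a sum decomposition (equation (16)): Let g be a set function on a finite ground set Ω that admits a sum decomposition 𝒢 = {g_1, …, g_m}, i.e., each g_k is normalized, monotone, and submodular and g(X) = Σ_{k=1}^{m} g_k(X) for all X ⊆ Ω. Then for all pairwise disjoint A, B, X ⊆ Ω, g(A;B|X) ≥ −Σ_{k=1}^{m} min(g_k(A), g_k(B)). -/
open Finset

/-- Second derivative `g(A;B|X) = g(A | B ∪ X) − g(A | X)`. -/
def d2 {Ω : Type*} [DecidableEq Ω] (g : Finset Ω → ℝ) (A B X : Finset Ω) : ℝ :=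
  marg g A (B ∪ X) - marg g A X

lemma d2_symm {Ω : Type*} [DecidableEq Ω] (g : Finset Ω → ℝ) (A B X : Finset Ω) :
    d2 g A B X = d2 g B A X := by
  simp only [d2, marg]
  have h1 : B ∪ X ∪ A = A ∪ X ∪ B := by
    ext x; simp [or_comm, or_left_comm]
  have h2 : X ∪ A = A ∪ X := union_comm _ _
  have h3 : X ∪ B = B ∪ X := union_comm _ _
  rw [h1, h2, h3]; ring

lemma d2_ge_neg {Ω : Type*} [DecidableEq Ω] (h : Finset Ω → ℝ)
    (hnorm : h ∅ = 0)
    (hmono : ∀ ⦃A B : Finset Ω⦄, B ⊆ A → h B ≤ h A)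
    (hsub : ∀ ⦃A B C : Finset Ω⦄, B ⊆ A → Disjoint A C →
      h (A ∪ C) - h A ≤ h (B ∪ C) - h B)
    (A B X : Finset Ω) (hAX : Disjoint A X) :
    d2 h A B X ≥ -h A := by
  have h1 : (0:ℝ) ≤ marg h A (B ∪ X) := by
    have := hmono (show B ∪ X ⊆ (B ∪ X) ∪ A from fun x hx => mem_union_left _ hx)
    simpa [marg] using sub_nonneg.mpr this
  have h2 : marg h A X ≤ h A := by
    have := hsub (A := X) (B := ∅) (C := A) (empty_subset X) hAX.symm
    simpa [marg, hnorm] using this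
  simp only [d2]
  linarith

/-- second-derivative bound via a sum decomposition (equation (16)). -/
theorem second_derivative_sum_decomposition_bound
    {Ω : Type*} [Fintype Ω] [DecidableEq Ω]
    (g : Finset Ω → ℝ)
    (m : ℕ) (gs : Fin m → Finset Ω → ℝ)
    (hnorm : ∀ k, gs k ∅ = 0)
    (hmono : ∀ k, ∀ ⦃A B : Finset Ω⦄, B ⊆ A → gs k B ≤ gs k A)
    (hsub : ∀ k, ∀ ⦃A B C : Finset Ω⦄, B ⊆ A → Disjoint A C →
      gs k (A ∪ C) - gs k A ≤ gs k (B ∪ C) - gs k B)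
    (hdecomp : ∀ X : Finset Ω, g X = ∑ k : Fin m, gs k X)
    (A B X : Finset Ω)
    (hAB : Disjoint A B) (hAX : Disjoint A X) (hBX : Disjoint B X) :
    d2 g A B X ≥ -∑ k : Fin m, min (gs k A) (gs k B) := by
  have hsplit : d2 g A B X = ∑ k : Fin m, d2 (gs k) A B X := by
    simp only [d2, marg, hdecomp]
    rw [← Finset.sum_sub_distrib, ← Finset.sum_sub_distrib, ← Finset.sum_sub_distrib]
  rw [hsplit, ← Finset.sum_neg_distrib]
  apply Finset.sum_le_sum
  intro k _
  have hA := d2_ge_neg (gs k) (hnorm k) (hmono k) (hsub k) A B X hAX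
  have hB := d2_ge_neg (gs k) (hnorm k) (hmono k) (hsub k) B A X hBX
  rw [← d2_symm] at hB
  rcases min_cases (gs k A) (gs k B) with ⟨h, _⟩ | ⟨h, _⟩ <;> rw [h] <;> linarith
end

section
/- Pairwise redundancy weight bound (equation (18)): Let g admit a sum decomposition 𝒢 = {g_1, …, g_m} on a finite ground set Ω with disjoint blocks U_i, U_j ⊆ Ω. Define W(i,j) := max_{x_i ∈ U_i, x_j ∈ U_j} Σ_{k=1}^{m} min(g_k({x_i}), g_k({x_j})). Then for all x'_i ∈ U_i, x'_j ∈ U_j, and X ⊆ Ω \ {x'_i, x'_j}, one has −g({x'_i}; {x'_j} | X) ≤ W(i,j). -/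
open Finset

/-- pairwise redundancy weight bound (equation (18)). -/
theorem pairwise_redundancy_weight_bound
    {Ω : Type*} [Fintype Ω] [DecidableEq Ω]
    (g : Finset Ω → ℝ)
    (m : ℕ) (gs : Fin m → Finset Ω → ℝ)
    (hnorm : ∀ k, gs k ∅ = 0)
    (hmono : ∀ k, ∀ ⦃A B : Finset Ω⦄, B ⊆ A → gs k B ≤ gs k A)
    (hsub : ∀ k, ∀ ⦃A B C : Finset Ω⦄, B ⊆ A → Disjoint A C →
      gs k (A ∪ C) - gs k A ≤ gs k (B ∪ C) - gs k B)
    (hdecomp : ∀ X : Finset Ω, g X = ∑ k : Fin m, gs k X)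
    (Ui Uj : Finset Ω) (hUi : Ui.Nonempty) (hUj : Uj.Nonempty)
    (hUij : Disjoint Ui Uj)
    (W : ℝ)
    (hW : W = (Ui ×ˢ Uj).sup' (hUi.product hUj)
        (fun p => ∑ k : Fin m, min (gs k {p.1}) (gs k {p.2}))) :
    ∀ xi ∈ Ui, ∀ xj ∈ Uj, ∀ X : Finset Ω,
      X ⊆ Finset.univ \ {xi, xj} →
      -d2 g {xi} {xj} X ≤ W := by

  intro xi hxi xj hxj X hX
  have hxiX : xi ∉ X := fun h => by simpa using hX h
  have hxjX : xj ∉ X := fun h => by simpa using hX h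
  have hne : xi ≠ xj := by
    intro h
    exact Finset.disjoint_left.mp hUij hxi (h ▸ hxj)
  subst hW
  have key : ∀ k, (gs k (X ∪ {xi}) - gs k X) - (gs k (({xj} ∪ X) ∪ {xi}) - gs k ({xj} ∪ X))
      ≤ min (gs k {xi}) (gs k {xj}) := by
    intro k
    have hdXi : Disjoint X ({xi} : Finset Ω) := by simp [hxiX]
    have hdXj : Disjoint X ({xj} : Finset Ω) := by simp [hxjX]
    have b1 : gs k (X ∪ {xi}) - gs k X ≤ gs k {xi} := by
      have := hsub k (A := X) (B := ∅) (C := {xi}) (Finset.empty_subset _) hdXi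
      simpa [hnorm k] using this
    have b1' : gs k ({xj} ∪ X) ≤ gs k (({xj} ∪ X) ∪ {xi}) :=
      hmono k Finset.subset_union_left
    have b2 : gs k (X ∪ {xj}) - gs k X ≤ gs k {xj} := by
      have := hsub k (A := X) (B := ∅) (C := {xj}) (Finset.empty_subset _) hdXj
      simpa [hnorm k] using this
    have b2' : gs k (X ∪ {xi}) ≤ gs k ((X ∪ {xi}) ∪ {xj}) :=
      hmono k Finset.subset_union_left
    have heq : ({xj} ∪ X) ∪ {xi} = (X ∪ {xi}) ∪ {xj} := by
      ext a; simp; tauto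
    have heq2 : ({xj} ∪ X : Finset Ω) = X ∪ {xj} := Finset.union_comm _ _
    rw [heq, heq2] at b1' ⊢
    exact le_min (by linarith) (by linarith)
  have hd2 : -d2 g {xi} {xj} X
      = ∑ k : Fin m, ((gs k (X ∪ {xi}) - gs k X) - (gs k (({xj} ∪ X) ∪ {xi}) - gs k ({xj} ∪ X))) := by
    simp only [d2, marg, hdecomp, Finset.sum_sub_distrib]
    ring
  rw [hd2]
  calc ∑ k : Fin m, ((gs k (X ∪ {xi}) - gs k X) - (gs k (({xj} ∪ X) ∪ {xi}) - gs k ({xj} ∪ X)))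
      ≤ ∑ k : Fin m, min (gs k {xi}) (gs k {xj}) :=
        Finset.sum_le_sum fun k _ => key k
    _ ≤ _ := Finset.le_sup' (f := fun p => ∑ k : Fin m, min (gs k {p.1}) (gs k {p.2})) (b := (xi, xj))
        (Finset.mem_product.mpr ⟨hxi, hxj⟩)
end

section
/- Per-robot bound on the cost of distributed planning: Let g admit a sum decomposition 𝒢 = {g_1, …, g_m} on a finite ground set Ω partitioned into nonempty pairwise-disjoint blocks U_1, …, U_n, and let X^d = {x^d_1, …, x^d_n} be an assignment with x^d_i ∈ U_i. Fix i and an in-neighbor set N_i ⊆ {1, …, i−1} with ignored set N̂_i := {1, …, i−1} \ N_i. Then the distributed-planning cost γ^dist_i := g(x^d_i | X^d_{N_i}) − g(x^d_i | X^d_{1:i−1}) satisfies γ^dist_i ≤ Σ_{j ∈ N̂_i} Ŵ(i,j), where Ŵ(i,j) := Σ_{k=1}^{m} min(max_{x ∈ U_i} g_k({x}), max_{x ∈ U_j} g_k({x})). -/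
open Finset

lemma step_bound {Ω : Type*} [DecidableEq Ω] (gk : Finset Ω → ℝ)
    (hnorm : gk ∅ = 0)
    (hmono : ∀ ⦃A B : Finset Ω⦄, B ⊆ A → gk B ≤ gk A)
    (hsub : ∀ ⦃A B C : Finset Ω⦄, B ⊆ A → Disjoint A C →
      gk (A ∪ C) - gk A ≤ gk (B ∪ C) - gk B)
    (S : Finset Ω) (x a : Ω) (hx : x ∉ S) (ha : a ∉ S) :
    (gk (S ∪ {x}) - gk S) - (gk ((S ∪ {a}) ∪ {x}) - gk (S ∪ {a}))
      ≤ min (gk {x}) (gk {a}) := by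
  have hda : Disjoint S ({a} : Finset Ω) := by simpa using ha
  have hdx : Disjoint S ({x} : Finset Ω) := by simpa using hx
  have h1 : gk (S ∪ {a}) - gk S ≤ gk {a} := by
    have := hsub (A := S) (B := ∅) (C := {a}) (empty_subset S) hda
    simpa [hnorm] using this
  have h2 : gk (S ∪ {x}) - gk S ≤ gk {x} := by
    have := hsub (A := S) (B := ∅) (C := {x}) (empty_subset S) hdx
    simpa [hnorm] using this
  have hm1 : gk (S ∪ {x}) ≤ gk ((S ∪ {a}) ∪ {x}) := by
    apply hmono
    exact union_subset_union_left (subset_union_left)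
  have hm2 : gk (S ∪ {a}) ≤ gk ((S ∪ {x}) ∪ {a}) := by
    apply hmono
    exact union_subset_union_left (subset_union_left)
  have hcomm : (S ∪ {a}) ∪ {x} = (S ∪ {x}) ∪ {a} := union_right_comm S {a} {x}
  rw [le_min_iff]
  constructor
  · rw [hcomm] at hm1 ⊢; linarith
  · linarith

lemma key_bound {Ω : Type*} [DecidableEq Ω] (gk : Finset Ω → ℝ)
    (hnorm : gk ∅ = 0)
    (hmono : ∀ ⦃A B : Finset Ω⦄, B ⊆ A → gk B ≤ gk A)
    (hsub : ∀ ⦃A B C : Finset Ω⦄, B ⊆ A → Disjoint A C →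
      gk (A ∪ C) - gk A ≤ gk (B ∪ C) - gk B)
    (x : Ω) (D : Finset Ω) :
    ∀ (S : Finset Ω), Disjoint S D → x ∉ S → x ∉ D →
      (gk (S ∪ {x}) - gk S) - (gk ((S ∪ D) ∪ {x}) - gk (S ∪ D))
        ≤ ∑ d ∈ D, min (gk {x}) (gk {d}) := by
  induction D using Finset.induction_on with
  | empty => intro S _ _ _; simp
  | @insert a D' haD' ih =>
    intro S hdisj hxS hxD
    have haS : a ∉ S := by
      intro h; exact (Finset.disjoint_left.mp hdisj h) (mem_insert_self a D')
    have hdisj' : Disjoint S D' :=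
      hdisj.mono_right (Finset.subset_insert a D')
    have hxD' : x ∉ D' := fun h => hxD (mem_insert_of_mem h)
    have hxa : x ≠ a := fun h => hxD (h ▸ mem_insert_self a D')
    have hxSD' : x ∉ S ∪ D' := by simp [hxS, hxD']
    have haSD' : a ∉ S ∪ D' := by
      simp only [mem_union]
      rintro (h | h)
      · exact haS h
      · exact haD' h
    have h1 := ih S hdisj' hxS hxD'
    have h2 := step_bound gk hnorm hmono hsub (S ∪ D') x a hxSD' haSD'
    have hset : S ∪ insert a D' = (S ∪ D') ∪ {a} := by
      ext y; simp [or_comm, or_assoc, or_left_comm]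
    rw [hset, Finset.sum_insert haD']
    linarith

/-- per-robot bound on the cost of distributed planning. -/
theorem per_robot_distributed_cost_bound
    {Ω : Type*} [Fintype Ω] [DecidableEq Ω]
    (g : Finset Ω → ℝ)
    (m : ℕ) (gs : Fin m → Finset Ω → ℝ)
    (hnorm : ∀ k, gs k ∅ = 0)
    (hmono : ∀ k, ∀ ⦃A B : Finset Ω⦄, B ⊆ A → gs k B ≤ gs k A)
    (hsub : ∀ k, ∀ ⦃A B C : Finset Ω⦄, B ⊆ A → Disjoint A C →
      gs k (A ∪ C) - gs k A ≤ gs k (B ∪ C) - gs k B)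
    (hdecomp : ∀ X : Finset Ω, g X = ∑ k : Fin m, gs k X)
    (n : ℕ) (U : Fin n → Finset Ω)
    (hUne : ∀ i, (U i).Nonempty)
    (hUdisj : ∀ i j, i ≠ j → Disjoint (U i) (U j))
    (hUcover : ∀ x : Ω, ∃ i, x ∈ U i)
    (xd : Fin n → Ω) (hxd : ∀ i, xd i ∈ U i)
    (i : Fin n) (Ni : Finset (Fin n)) (hNi : ∀ j ∈ Ni, j < i) :
    marg g {xd i} (Finset.image xd Ni)
        - marg g {xd i} (Finset.image xd (Finset.univ.filter (· < i)))
      ≤ ∑ j ∈ (Finset.univ.filter (· < i)) \ Ni,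
          ∑ k : Fin m,
            min ((U i).sup' (hUne i) (fun x => gs k {x}))
                ((U j).sup' (hUne j) (fun x => gs k {x})) := by
  have hinj : Function.Injective xd := by
    intro a b h
    by_contra hab
    exact (Finset.disjoint_left.mp (hUdisj a b hab) (hxd a)) (h ▸ hxd b)
  set P : Finset (Fin n) := Finset.univ.filter (· < i) with hP
  have hNiP : Ni ⊆ P := by
    intro j hj; simp [hP, hNi j hj]
  set S : Finset Ω := Finset.image xd Ni with hS
  set D : Finset Ω := Finset.image xd (P \ Ni) with hD
  have hSD : S ∪ D = Finset.image xd P := by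
    rw [hS, hD, ← Finset.image_union, Finset.union_sdiff_of_subset hNiP]
  have hdisjSD : Disjoint S D := by
    rw [hS, hD, Finset.disjoint_image hinj]
    exact Finset.disjoint_sdiff
  have hxnot : ∀ Q : Finset (Fin n), (∀ j ∈ Q, j < i) → xd i ∉ Finset.image xd Q := by
    intro Q hQ h
    obtain ⟨j, hj, hji⟩ := Finset.mem_image.mp h
    exact (ne_of_lt (hQ j hj)) (hinj hji)
  have hxS : xd i ∉ S := hxnot Ni hNi
  have hxD : xd i ∉ D := by
    apply hxnot
    intro j hj
    have := Finset.mem_sdiff.mp hj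
    simpa [hP] using this.1
  have hkey : ∀ k : Fin m,
      (gs k (S ∪ {xd i}) - gs k S) - (gs k ((S ∪ D) ∪ {xd i}) - gs k (S ∪ D))
        ≤ ∑ j ∈ P \ Ni, min ((U i).sup' (hUne i) (fun x => gs k {x}))
            ((U j).sup' (hUne j) (fun x => gs k {x})) := by
    intro k
    have h1 := key_bound (gs k) (hnorm k) (hmono k) (hsub k) (xd i) D S hdisjSD hxS hxD
    refine h1.trans ?_
    rw [hD, Finset.sum_image (fun a _ b _ h => hinj h)]
    apply Finset.sum_le_sum
    intro j hj
    exact min_le_min (Finset.le_sup' (fun x => gs k {x}) (hxd i)) (Finset.le_sup' (fun x => gs k {x}) (hxd j))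
  have hmain : marg g {xd i} S - marg g {xd i} (Finset.image xd P)
      ≤ ∑ k : Fin m, ∑ j ∈ P \ Ni, min ((U i).sup' (hUne i) (fun x => gs k {x}))
            ((U j).sup' (hUne j) (fun x => gs k {x})) := by
    rw [← hSD]
    unfold marg
    rw [hdecomp, hdecomp, hdecomp, hdecomp]
    rw [← Finset.sum_sub_distrib, ← Finset.sum_sub_distrib, ← Finset.sum_sub_distrib]
    exact Finset.sum_le_sum (fun k _ => hkey k)
  rw [Finset.sum_comm] at hmain
  exact hmain
end

section
/- Per-robot combined cost bound (equation (27) in the proof of Theorem 1): Let g be a normalized, monotone, submodular set function on a finite ground set Ω partitioned into nonempty pairwise-disjoint blocks U_1, …, U_n, let X^d = {x^d_1, …, x^d_n} be an assignment with x^d_i ∈ U_i, fix i, N_i ⊆ {1, …, i−1}, and an approximation g̃_i : U_i → ℝ of the marginal gains x ↦ g(x | X^d_{N_i}). Then γ^gen_i(g, x^d_i, X^d_{1:i−1}) ≤ γ^obj_i + γ^plan_i + γ^dist_i, where γ^gen_i(g, x, A) := max_{x'∈U_i} g(x'|A) − g(x|A); γ^dist_i := g(x^d_i | X^d_{N_i})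 − g(x^d_i | X^d_{1:i−1}); γ^obj_i := max_{x_1,x_2 ∈ U_i} [ (g̃_i(x_1) − g(x_1|X^d_{N_i})) + (g(x_2|X^d_{N_i}) − g̃_i(x_2)) ]; and γ^plan_i := max_{x'∈U_i} g̃_i(x') − g̃_i(x^d_i). -/
open Finset

/-- per-robot combined cost bound (equation (27)). -/
theorem per_robot_combined_cost_bound
    {Ω : Type*} [Fintype Ω] [DecidableEq Ω]
    (g : Finset Ω → ℝ)
    (hnorm : g ∅ = 0)
    (hmono : ∀ ⦃A B : Finset Ω⦄, B ⊆ A → g B ≤ g A)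
    (hsub : ∀ ⦃A B C : Finset Ω⦄, B ⊆ A → Disjoint A C →
      g (A ∪ C) - g A ≤ g (B ∪ C) - g B)
    (n : ℕ) (U : Fin n → Finset Ω)
    (hUne : ∀ i, (U i).Nonempty)
    (hUdisj : ∀ i j, i ≠ j → Disjoint (U i) (U j))
    (hUcover : ∀ x : Ω, ∃ i, x ∈ U i)
    (xd : Fin n → Ω) (hxd : ∀ i, xd i ∈ U i)
    (i : Fin n) (Ni : Finset (Fin n)) (hNi : ∀ j ∈ Ni, j < i)
    (gt : Ω → ℝ) :
    (U i).sup' (hUne i)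
        (fun x => marg g {x} (Finset.image xd (Finset.univ.filter (· < i))))
      - marg g {xd i} (Finset.image xd (Finset.univ.filter (· < i)))
    ≤ ((U i ×ˢ U i).sup' ((hUne i).product (hUne i))
          (fun p => (gt p.1 - marg g {p.1} (Finset.image xd Ni))
            + (marg g {p.2} (Finset.image xd Ni) - gt p.2)))
      + ((U i).sup' (hUne i) gt - gt (xd i))
      + (marg g {xd i} (Finset.image xd Ni)
        - marg g {xd i} (Finset.image xd (Finset.univ.filter (· < i)))) := by

  set A := Finset.image xd (Finset.univ.filter (· < i)) with hA
  set B := Finset.image xd Ni with hB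
  have hBA : B ⊆ A := by
    apply Finset.image_subset_image
    intro j hj
    simp [Finset.mem_filter, hNi j hj]
  have hdisjA : ∀ x ∈ U i, Disjoint A {x} := by
    intro x hx
    rw [Finset.disjoint_singleton_right]
    intro hxA
    rw [hA] at hxA
    obtain ⟨j, hj, rfl⟩ := Finset.mem_image.mp hxA
    have hji : j < i := (Finset.mem_filter.mp hj).2
    exact Finset.disjoint_left.mp (hUdisj j i (ne_of_lt hji)) (hxd j) hx
  have hmarg : ∀ x ∈ U i, marg g {x} A ≤ marg g {x} B := by
    intro x hx
    exact hsub hBA (hdisjA x hx)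
  rw [sub_le_iff_le_add]
  apply Finset.sup'_le
  intro x hx
  have h1 := hmarg x hx
  have h2 : (gt (xd i) - marg g {xd i} B) + (marg g {x} B - gt x)
      ≤ (U i ×ˢ U i).sup' ((hUne i).product (hUne i))
          (fun p => (gt p.1 - marg g {p.1} B) + (marg g {p.2} B - gt p.2)) :=
    Finset.le_sup' (fun p : Ω × Ω => (gt p.1 - marg g {p.1} B) + (marg g {p.2} B - gt p.2))
      (show ((xd i, x)) ∈ U i ×ˢ U i from Finset.mem_product.mpr ⟨hxd i, hx⟩)
  have h3 : gt x ≤ (U i).sup' (hUne i) gt := Finset.le_sup' _ hx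
  linarith
end

section
/- Double-integral identity for the minimum of a nonincreasing kernel (Appendix IV, equation (39)): Let n ≥ 1 be an integer, R > 0, and let φ : ℝ → ℝ be nonnegative, nonincreasing, and integrable on [0, R] against r^{2n−1}. Then ∫_0^R ∫_0^R r_1^{n−1} r_2^{n−1} min(φ(r_1), φ(r_2)) dr_1 dr_2 = (2/n) ∫_0^R r^{2n−1} φ(r) dr. -/
/-!
After extending `φ` to an antitone function on `ℝ`, `min (φ x) (φ y) = φ (max x y)`. With weight
`f r = r ^ (n - 1)` and its primitive `F r = r ^ n / n`, splitting the inner integral at `x` gives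
`F x φ x + ∫_x^R f φ`. Integrating the second term against `f x` by parts yields `∫ F f φ` once
more, so the double integral is `2 ∫ F f φ = (2 / n) ∫ r ^ (2n - 1) φ`. Since `φ` may jump, the
integration by parts uses the fundamental theorem of calculus off the countable set of
discontinuities of `φ`.
-/

open MeasureTheory intervalIntegral Set

section

variable {a b : ℝ} {f ψ : ℝ → ℝ}

theorem Antitone.intervalIntegrable_mul (hψ : Antitone ψ) (hf : Continuous f) :
    IntervalIntegrable (fun x => f x * ψ x) volume a b :=
  (hψ.antitoneOn _).intervalIntegrable.continuousOn_mul hf.continuousOn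

theorem Antitone.continuous_integral_mul (hψ : Antitone ψ) (hf : Continuous f) :
    Continuous fun x => ∫ y in x..b, f y * ψ y :=
  (continuous_primitive (fun _ _ => hψ.intervalIntegrable_mul hf) b).neg.congr
    fun x => (integral_symm b x).symm

theorem integral_mul_map_max_eq (hf : Continuous f) (hψ : Antitone ψ) {x : ℝ}
    (hx : x ∈ Icc a b) :
    ∫ y in a..b, f y * ψ (max x y) = (∫ y in a..x, f y) * ψ x + ∫ y in x..b, f y * ψ y := by
  have hint : ∀ c d, IntervalIntegrable (fun y => f y * ψ (max x y)) volume c d := fun _ _ =>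
    (hψ.comp_monotone (monotone_const.max monotone_id)).intervalIntegrable_mul hf
  rw [← integral_add_adjacent_intervals (hint a x) (hint x b),
    ← intervalIntegral.integral_mul_const]
  congr 1
  · refine integral_congr fun y hy => ?_
    rw [uIcc_of_le hx.1] at hy
    simp only [max_eq_left hy.2]
  · refine integral_congr fun y hy => ?_
    rw [uIcc_of_le hx.2] at hy
    simp only [max_eq_right hy.1]

theorem integral_mul_integral_mul_eq (hab : a ≤ b) (hf : Continuous f) (hψ : Antitone ψ) :
    ∫ x in a..b, f x * ∫ y in x..b, f y * ψ y =
      ∫ x in a..b, (∫ y in a..x, f y) * (f x * ψ x) := by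
  set F : ℝ → ℝ := fun x => ∫ y in a..x, f y
  set G : ℝ → ℝ := fun x => ∫ y in x..b, f y * ψ y
  have hfψ : ∀ c d, IntervalIntegrable (fun x => f x * ψ x) volume c d := fun _ _ =>
    hψ.intervalIntegrable_mul hf
  have hF : Continuous F := continuous_primitive (fun _ _ => hf.intervalIntegrable _ _) a
  have hG : Continuous G := hψ.continuous_integral_mul hf
  have hfG : IntervalIntegrable (fun x => f x * G x) volume a b :=
    (hf.mul hG).intervalIntegrable a b
  have hFfψ : IntervalIntegrable (fun x => F x * (f x * ψ x)) volume a b :=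
    (hfψ a b).continuousOn_mul hF.continuousOn
  have hFG := integral_eq_of_hasDerivAt_off_countable_of_le (F * G)
    (fun x => f x * G x - F x * (f x * ψ x)) hab hψ.countable_not_continuousAt
    (hF.mul hG).continuousOn ?deriv (hfG.sub hFfψ)
  · simp only [Pi.mul_apply, F, G, integral_same, mul_zero, zero_mul, sub_zero] at hFG
    rwa [integral_sub hfG hFfψ, sub_eq_zero] at hFG
  rintro x ⟨-, hψx⟩
  have hF' : HasDerivAt F (f x) x := (hf.integral_hasStrictDerivAt a x).hasDerivAt
  have hG' : HasDerivAt G (-(f x * ψ x)) x :=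
    integral_hasDerivAt_left (hfψ x b)
      (hf.measurable.mul hψ.measurable).stronglyMeasurable.stronglyMeasurableAtFilter
      (hf.continuousAt.mul (not_not.mp hψx))
  exact (hF'.mul hG').congr_deriv (by ring)

theorem integral_integral_mul_min_of_antitone (hab : a ≤ b) (hf : Continuous f)
    (hψ : Antitone ψ) :
    ∫ x in a..b, ∫ y in a..b, f x * f y * min (ψ x) (ψ y) =
      2 * ∫ x in a..b, (∫ y in a..x, f y) * (f x * ψ x) := by
  have hF : Continuous fun x => ∫ y in a..x, f y :=
    continuous_primitive (fun _ _ => hf.intervalIntegrable _ _) a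
  have hFfψ : IntervalIntegrable (fun x => (∫ y in a..x, f y) * (f x * ψ x)) volume a b :=
    hψ.intervalIntegrable_mul hf |>.continuousOn_mul hF.continuousOn
  have hfG : IntervalIntegrable (fun x => f x * ∫ y in x..b, f y * ψ y) volume a b :=
    (hf.mul (hψ.continuous_integral_mul hf)).intervalIntegrable a b
  calc ∫ x in a..b, ∫ y in a..b, f x * f y * min (ψ x) (ψ y)
      = ∫ x in a..b, f x * ((∫ y in a..x, f y) * ψ x + ∫ y in x..b, f y * ψ y) := by
        refine integral_congr fun x hx => ?_
        rw [uIcc_of_le hab] at hx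
        simp only [← hψ.map_max, mul_assoc, intervalIntegral.integral_const_mul,
          integral_mul_map_max_eq hf hψ hx]
    _ = ∫ x in a..b, (∫ y in a..x, f y) * (f x * ψ x) + f x * ∫ y in x..b, f y * ψ y :=
        integral_congr fun x _ => by ring
    _ = 2 * ∫ x in a..b, (∫ y in a..x, f y) * (f x * ψ x) := by
        rw [integral_add hFfψ hfG, integral_mul_integral_mul_eq hab hf hψ]
        ring

theorem integral_integral_mul_min_of_antitoneOn (hab : a ≤ b) (hf : Continuous f)
    (hψ : AntitoneOn ψ (Icc a b)) :
    ∫ x in a..b, ∫ y in a..b, f x * f y * min (ψ x) (ψ y) =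
      2 * ∫ x in a..b, (∫ y in a..x, f y) * (f x * ψ x) := by
  obtain ⟨ψ', hψ', hψψ'⟩ := hψ.exists_antitone_extension
    (hψ.map_isGreatest (isGreatest_Icc hab)).bddBelow
    (hψ.map_isLeast (isLeast_Icc hab)).bddAbove
  have heq : ∀ x ∈ uIcc a b, ψ x = ψ' x := by
    rw [uIcc_of_le hab]; exact hψψ'
  calc ∫ x in a..b, ∫ y in a..b, f x * f y * min (ψ x) (ψ y)
      = ∫ x in a..b, ∫ y in a..b, f x * f y * min (ψ' x) (ψ' y) :=
        integral_congr fun x hx => integral_congr fun y hy => by simp only [heq x hx, heq y hy]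
    _ = 2 * ∫ x in a..b, (∫ y in a..x, f y) * (f x * ψ' x) :=
        integral_integral_mul_min_of_antitone hab hf hψ'
    _ = 2 * ∫ x in a..b, (∫ y in a..x, f y) * (f x * ψ x) := by
        congr 1
        exact integral_congr fun x hx => by simp only [heq x hx]

end

theorem integral_pow_pred_mul_pow_pred {n : ℕ} (hn : 1 ≤ n) (x : ℝ) :
    (∫ y in (0 : ℝ)..x, y ^ (n - 1)) * x ^ (n - 1) = x ^ (2 * n - 1) / n := by
  obtain ⟨k, rfl⟩ : ∃ k, n = k + 1 := ⟨n - 1, by omega⟩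
  rw [integral_pow, show 2 * (k + 1) - 1 = k + 1 + k by omega]
  simp only [add_tsub_cancel_right, Nat.cast_add, Nat.cast_one]
  field_simp
  ring

theorem double_integral_min_identity_general
    (n : ℕ) (hn : 1 ≤ n) (R : ℝ) (hR : 0 < R)
    (φ : ℝ → ℝ)
    (hanti : AntitoneOn φ (Set.Icc (0 : ℝ) R)) :
    (∫ r₁ in (0:ℝ)..R, ∫ r₂ in (0:ℝ)..R,
        r₁ ^ (n - 1) * r₂ ^ (n - 1) * min (φ r₁) (φ r₂))
      = (2 / (n : ℝ)) * ∫ r in (0:ℝ)..R, r ^ (2 * n - 1) * φ r := by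
  rw [integral_integral_mul_min_of_antitoneOn hR.le (continuous_pow (n - 1)) hanti]
  simp_rw [← mul_assoc, integral_pow_pred_mul_pow_pred hn, div_mul_eq_mul_div,
    intervalIntegral.integral_div]
  ring

/-- double-integral identity for the minimum of a
nonincreasing kernel (Appendix IV, equation (39)). -/
theorem double_integral_min_identity
    (n : ℕ) (hn : 1 ≤ n) (R : ℝ) (hR : 0 < R)
    (φ : ℝ → ℝ)
    (hφ0 : ∀ r ∈ Set.Icc (0 : ℝ) R, 0 ≤ φ r)
    (hanti : AntitoneOn φ (Set.Icc (0 : ℝ) R))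
    (hint : IntervalIntegrable (fun r => r ^ (2 * n - 1) * φ r) volume 0 R) :
    (∫ r₁ in (0:ℝ)..R, ∫ r₂ in (0:ℝ)..R,
        r₁ ^ (n - 1) * r₂ ^ (n - 1) * min (φ r₁) (φ r₂))
      = (2 / (n : ℝ)) * ∫ r in (0:ℝ)..R, r ^ (2 * n - 1) * φ r :=
  double_integral_min_identity_general n hn R hR φ hanti
end
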